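/- arXiv:math/0503601 — 2 statements merged into one kernel-verified Lean document; each statement's English description precedes it below -/
import Mathlib

section
/- Let (a_k)_{k \ge 1} be real numbers with sup_k a_k < 1 and \sum_k |a_k| < \infty, and let (Z_k) be i.i.d. standard normal random variables. Then E[exp((1/2) \sum_{k=1}^\infty a_k Z_k^2)] = \prod_{k=1}^\infty (1 - a_k)^{-1/2}, and both sides are finite. -/
/-!
For finitely many factors the expectation splits by independence, and the one-dimensional Gaussian
integral gives `E[exp (c Z² / 2)] = (1 - c)^(-1/2)` for `c < 1`. Since `∑ |a k| E[Z k ²] < ∞`, the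
series `∑ a k Z k²` converges almost surely, and Fatou's lemma makes `exp (½ ∑ a k Z k²)`
integrable, the partial expectations being bounded by the convergent partial products. The
partial exponentials are dominated by the integrable `exp (½ ∑ (a k)⁺ Z k²)`, so dominated
convergence identifies the expectation with the infinite product.
-/

open MeasureTheory ProbabilityTheory Real Filter Topology
open scoped NNReal ENNReal

lemma integral_exp_mul_sq_gaussianReal {v : ℝ≥0} {c : ℝ} (hc : c * v < 1) :
    ∫ x, rexp (c / 2 * x ^ 2) ∂gaussianReal 0 v = (1 - c * v) ^ (-(1 : ℝ) / 2) := by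
  rcases eq_or_ne v 0 with rfl | hv
  · simp
  have hcv : 0 < 1 - c * v := by linarith
  calc ∫ x, rexp (c / 2 * x ^ 2) ∂gaussianReal 0 v
      = ∫ x, (√(2 * π * v))⁻¹ * rexp (-((1 - c * v) / (2 * v)) * x ^ 2) := by
        rw [integral_gaussianReal_eq_integral_smul hv]
        congr 1 with x
        rw [gaussianPDFReal, smul_eq_mul, mul_assoc, ← Real.exp_add]
        congr 2
        field_simp
        ring
    _ = √((1 - c * v)⁻¹) := by
        rw [integral_const_mul, integral_gaussian, ← Real.sqrt_inv, ← Real.sqrt_mul (by positivity)]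
        congr 1
        field_simp
    _ = (1 - c * v) ^ (-(1 : ℝ) / 2) := by
        rw [Real.sqrt_eq_rpow, Real.inv_rpow hcv.le, ← Real.rpow_neg hcv.le]
        ring_nf

lemma integrable_of_tendsto_of_bddAbove_integral {α : Type*} [MeasurableSpace α] {μ : Measure α}
    {f : ℕ → α → ℝ} {F : α → ℝ} (hf : ∀ n, Integrable (f n) μ) (hf_nonneg : ∀ n, 0 ≤ᵐ[μ] f n)
    (hfF : ∀ᵐ x ∂μ, Tendsto (fun n => f n x) atTop (𝓝 (F x)))
    (hbdd : BddAbove (Set.range fun n => ∫ x, f n x ∂μ)) :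
    Integrable F μ := by
  obtain ⟨C, hC⟩ := hbdd
  refine ⟨aestronglyMeasurable_of_tendsto_ae _ (fun n => (hf n).1) hfF, ?_⟩
  have hlint : ∀ n, ∫⁻ x, ‖f n x‖ₑ ∂μ = ENNReal.ofReal (∫ x, f n x ∂μ) := fun n => by
    rw [ofReal_integral_eq_lintegral_ofReal (hf n) (hf_nonneg n)]
    exact lintegral_congr_ae ((hf_nonneg n).mono fun x hx => Real.enorm_eq_ofReal hx)
  rw [hasFiniteIntegral_iff_enorm]
  calc ∫⁻ x, ‖F x‖ₑ ∂μ = ∫⁻ x, liminf (fun n => ‖f n x‖ₑ) atTop ∂μ :=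
        lintegral_congr_ae (hfF.mono fun x hx => hx.enorm.liminf_eq.symm)
    _ ≤ liminf (fun n => ∫⁻ x, ‖f n x‖ₑ ∂μ) atTop :=
        lintegral_liminf_le' fun n => (hf n).1.aemeasurable.enorm
    _ ≤ ENNReal.ofReal C := liminf_le_of_frequently_le' <| Frequently.of_forall fun n => by
        rw [hlint]
        exact ENNReal.ofReal_le_ofReal (hC ⟨n, rfl⟩)
    _ < ∞ := ENNReal.ofReal_lt_top

lemma multipliable_one_sub_rpow {ι : Type*} {c : ι → ℝ} (hc : Summable c) (hc_lt : ∀ k, c k < 1)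
    (r : ℝ) : Multipliable fun k => (1 - c k) ^ r := by
  have hpos : ∀ k, 0 < 1 - c k := fun k => sub_pos.2 (hc_lt k)
  refine multipliable_of_summable_log (fun k => Real.rpow_pos_of_pos (hpos k) r) ?_
  simp_rw [Real.log_rpow (hpos _), sub_eq_add_neg]
  exact (Real.summable_log_one_add_of_summable hc.neg).mul_left r

section IndependentGaussians

variable {ι Ω : Type*} [MeasurableSpace Ω] {μ : Measure Ω} {Z : ι → Ω → ℝ} {c : ι → ℝ}

lemma integral_exp_half_sum_mul_sq (hmeas : ∀ k, Measurable (Z k)) (hindep : iIndepFun Z μ)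
    (hlaw : ∀ k, μ.map (Z k) = gaussianReal 0 1) (s : Finset ι) (hc : ∀ k ∈ s, c k < 1) :
    ∫ ω, rexp ((1 : ℝ) / 2 * ∑ k ∈ s, c k * Z k ω ^ 2) ∂μ =
      ∏ k ∈ s, (1 - c k) ^ (-(1 : ℝ) / 2) := by
  have hX : iIndepFun (fun k ω => c k * Z k ω ^ 2) μ :=
    hindep.comp (fun k x => c k * x ^ 2) fun k => by fun_prop
  calc ∫ ω, rexp ((1 : ℝ) / 2 * ∑ k ∈ s, c k * Z k ω ^ 2) ∂μ
      = mgf (∑ k ∈ s, fun ω => c k * Z k ω ^ 2) μ (1 / 2) := by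
        simp only [mgf, Finset.sum_apply]
    _ = ∏ k ∈ s, mgf (fun ω => c k * Z k ω ^ 2) μ (1 / 2) :=
        hX.mgf_sum (fun k => by fun_prop) s
    _ = ∏ k ∈ s, (1 - c k) ^ (-(1 : ℝ) / 2) := Finset.prod_congr rfl fun k hk => by
        have h := integral_exp_mul_sq_gaussianReal (v := 1) (c := c k) (by simpa using hc k hk)
        rw [← hlaw k, integral_map (hmeas k).aemeasurable (by fun_prop)] at h
        simpa [mgf, mul_assoc, div_eq_inv_mul] using h

lemma integrable_exp_half_sum_mul_sq (hmeas : ∀ k, Measurable (Z k)) (hindep : iIndepFun Z μ)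
    (hlaw : ∀ k, μ.map (Z k) = gaussianReal 0 1) (s : Finset ι) (hc : ∀ k ∈ s, c k < 1) :
    Integrable (fun ω => rexp ((1 : ℝ) / 2 * ∑ k ∈ s, c k * Z k ω ^ 2)) μ := by
  refine Integrable.of_integral_ne_zero ?_
  rw [integral_exp_half_sum_mul_sq hmeas hindep hlaw s hc]
  exact Finset.prod_ne_zero_iff.2 fun k hk => (Real.rpow_pos_of_pos (sub_pos.2 (hc k hk)) _).ne'

lemma ae_summable_mul_sq [Countable ι] (hmeas : ∀ k, Measurable (Z k))
    (hlaw : ∀ k, μ.map (Z k) = gaussianReal 0 1) (hc : Summable c) :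
    ∀ᵐ ω ∂μ, Summable fun k => c k * Z k ω ^ 2 := by
  have hM : eLpNorm (fun x : ℝ => x ^ 2) 1 (gaussianReal 0 1) ≠ ∞ :=
    (memLp_one_iff_integrable.2 (memLp_id_gaussianReal 2).integrable_sq).eLpNorm_ne_top
  have hnorm : ∀ k, eLpNorm (fun ω => c k * Z k ω ^ 2) 1 μ =
      ‖c k‖ₑ * eLpNorm (fun x : ℝ => x ^ 2) 1 (gaussianReal 0 1) := fun k => by
    rw [← hlaw k, eLpNorm_map_measure (by fun_prop) (hmeas k).aemeasurable]
    exact eLpNorm_const_smul (c k) (fun ω => Z k ω ^ 2) 1 μ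
  have hfin : ∑' k, eLpNorm (fun ω => c k * Z k ω ^ 2) 1 μ ≠ ∞ := by
    simp_rw [hnorm, ENNReal.tsum_mul_right]
    exact ENNReal.mul_ne_top (tsum_enorm_ne_top_iff_summable_norm.2 hc.norm) hM
  filter_upwards [summable_norm_of_tsum_eLpNorm_ne_top le_rfl (fun k => by fun_prop) hfin]
    with ω hω using hω.of_norm

end IndependentGaussians

lemma sum_mul_le_tsum_posPart_mul {ι : Type*} {c x : ι → ℝ} (hx : ∀ k, 0 ≤ x k)
    (h : Summable fun k => (c k)⁺ * x k) (s : Finset ι) :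
    ∑ k ∈ s, c k * x k ≤ ∑' k, (c k)⁺ * x k :=
  (Finset.sum_le_sum fun k _ => mul_le_mul_of_nonneg_right (le_posPart _) (hx k)).trans
    (h.sum_le_tsum s fun k _ => mul_nonneg (posPart_nonneg _) (hx k))

section GaussianSequence

variable {Ω : Type*} [MeasurableSpace Ω] {μ : Measure Ω} {Z : ℕ → Ω → ℝ} {c : ℕ → ℝ}

lemma tendsto_integral_exp_half_sum_mul_sq (hmeas : ∀ k, Measurable (Z k))
    (hindep : iIndepFun Z μ) (hlaw : ∀ k, μ.map (Z k) = gaussianReal 0 1) (hc : Summable c)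
    (hc_lt : ∀ k, c k < 1) :
    Tendsto (fun n => ∫ ω, rexp ((1 : ℝ) / 2 * ∑ k ∈ Finset.range n, c k * Z k ω ^ 2) ∂μ)
      atTop (𝓝 (∏' k, (1 - c k) ^ (-(1 : ℝ) / 2))) := by
  simp_rw [integral_exp_half_sum_mul_sq hmeas hindep hlaw _ fun k _ => hc_lt k]
  exact (multipliable_one_sub_rpow hc hc_lt _).tendsto_prod_tprod_nat

lemma ae_tendsto_exp_half_sum_mul_sq (hmeas : ∀ k, Measurable (Z k))
    (hlaw : ∀ k, μ.map (Z k) = gaussianReal 0 1) (hc : Summable c) :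
    ∀ᵐ ω ∂μ, Tendsto (fun n => rexp ((1 : ℝ) / 2 * ∑ k ∈ Finset.range n, c k * Z k ω ^ 2))
      atTop (𝓝 (rexp ((1 : ℝ) / 2 * ∑' k, c k * Z k ω ^ 2))) := by
  filter_upwards [ae_summable_mul_sq hmeas hlaw hc] with ω hω
  exact (hω.hasSum.tendsto_sum_nat.const_mul _).rexp

lemma integrable_exp_half_tsum_mul_sq (hmeas : ∀ k, Measurable (Z k))
    (hindep : iIndepFun Z μ) (hlaw : ∀ k, μ.map (Z k) = gaussianReal 0 1) (hc : Summable c)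
    (hc_lt : ∀ k, c k < 1) :
    Integrable (fun ω => rexp ((1 : ℝ) / 2 * ∑' k, c k * Z k ω ^ 2)) μ :=
  integrable_of_tendsto_of_bddAbove_integral
    (fun _ => integrable_exp_half_sum_mul_sq hmeas hindep hlaw _ fun k _ => hc_lt k)
    (fun _ => ae_of_all _ fun _ => (Real.exp_pos _).le)
    (ae_tendsto_exp_half_sum_mul_sq hmeas hlaw hc)
    (tendsto_integral_exp_half_sum_mul_sq hmeas hindep hlaw hc hc_lt).bddAbove_range

end GaussianSequence

theorem gaussian_chaos_product_formula_general
    {Ω : Type*} [MeasurableSpace Ω] (μ : Measure Ω)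
    (a : ℕ → ℝ) (hsup : ∀ k, a k < 1) (hsum : Summable fun k => |a k|)
    (Z : ℕ → Ω → ℝ) (hmeas : ∀ k, Measurable (Z k))
    (hindep : iIndepFun Z μ)
    (hlaw : ∀ k, μ.map (Z k) = gaussianReal 0 1) :
    Integrable (fun ω => Real.exp ((1 : ℝ) / 2 * ∑' k, a k * (Z k ω) ^ 2)) μ ∧
      ∫ ω, Real.exp ((1 : ℝ) / 2 * ∑' k, a k * (Z k ω) ^ 2) ∂μ =
        ∏' k, (1 - a k) ^ (-(1 : ℝ) / 2) := by
  have ha : Summable a := hsum.of_abs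
  have ha_pos : Summable fun k => (a k)⁺ :=
    hsum.of_nonneg_of_le (fun k => posPart_nonneg _) fun k => sup_le (le_abs_self _) (abs_nonneg _)
  have ha_pos_lt : ∀ k, (a k)⁺ < 1 := fun k => sup_lt_iff.2 ⟨hsup k, one_pos⟩
  refine ⟨integrable_exp_half_tsum_mul_sq hmeas hindep hlaw ha hsup, ?_⟩
  refine tendsto_nhds_unique ?_ (tendsto_integral_exp_half_sum_mul_sq hmeas hindep hlaw ha hsup)
  refine tendsto_integral_of_dominated_convergence _ (fun n => by fun_prop)
    (integrable_exp_half_tsum_mul_sq hmeas hindep hlaw ha_pos ha_pos_lt) (fun n => ?_)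
    (ae_tendsto_exp_half_sum_mul_sq hmeas hlaw ha)
  filter_upwards [ae_summable_mul_sq hmeas hlaw ha_pos] with ω hω
  rw [Real.norm_of_nonneg (Real.exp_pos _).le]
  gcongr
  exact sum_mul_le_tsum_posPart_mul (fun k => sq_nonneg _) hω _

theorem gaussian_chaos_product_formula
    {Ω : Type*} [MeasurableSpace Ω] (μ : Measure Ω) [IsProbabilityMeasure μ]
    (a : ℕ → ℝ) (hsup : ∀ k, a k < 1) (hsum : Summable fun k => |a k|)
    (Z : ℕ → Ω → ℝ) (hmeas : ∀ k, Measurable (Z k))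
    (hindep : iIndepFun Z μ)
    (hlaw : ∀ k, μ.map (Z k) = gaussianReal 0 1) :
    Integrable (fun ω => Real.exp ((1 : ℝ) / 2 * ∑' k, a k * (Z k ω) ^ 2)) μ ∧
      ∫ ω, Real.exp ((1 : ℝ) / 2 * ∑' k, a k * (Z k ω) ^ 2) ∂μ =
        ∏' k, (1 - a k) ^ (-(1 : ℝ) / 2) :=
  gaussian_chaos_product_formula_general μ a hsup hsum Z hmeas hindep hlaw
end

section
/- Let X be a centered real random variable (E[X] = 0) with E[exp(K_1 X^2)] < \infty for some K_1 > 0, and let a \in \mathbb{R}, y \in \mathbb{R}. Define Z_n = E[exp(a X y / \sqrt{n})] - 1. Then n Z_n \to (a^2 y^2 / 2) E[X^2] as n \to \infty. -/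
/-!
The Gaussian moment bound makes `exp (t X)` integrable for every `t`, so the moment generating
function `M` of `X` is analytic at `0`, and Taylor's theorem gives
`M t = 1 + E[X] t + E[X²] t² / 2 + o(t²)`. With `E[X] = 0` and `t = a y / √n` this reads
`n (M t - 1) = a² y² E[X²] / 2 + n · o(1 / n)`.
-/

open MeasureTheory Filter

open Real Asymptotics ProbabilityTheory Topology

lemma integrable_exp_mul_of_integrable_exp_mul_sq {Ω : Type*} [MeasurableSpace Ω]
    {μ : Measure Ω} {X : Ω → ℝ} (hX : AEMeasurable X μ) {K : ℝ} (hK : 0 < K)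
    (h : Integrable (fun ω ↦ exp (K * X ω ^ 2)) μ) (t : ℝ) :
    Integrable (fun ω ↦ exp (t * X ω)) μ := by
  refine (h.const_mul (exp (t ^ 2 / (4 * K)))).mono' (by fun_prop) (ae_of_all _ fun ω ↦ ?_)
  rw [norm_of_nonneg (exp_nonneg _), ← exp_add]
  gcongr
  have hsq_nonneg : 0 ≤ (2 * K * X ω - t) ^ 2 / (4 * K) := by positivity
  have hsq : (2 * K * X ω - t) ^ 2 / (4 * K) = t ^ 2 / (4 * K) + K * X ω ^ 2 - t * X ω := by
    field_simp; ring
  linarith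

lemma mgf_sub_sum_moments_isLittleO {Ω : Type*} [MeasurableSpace Ω] {μ : Measure Ω}
    {X : Ω → ℝ} (h : 0 ∈ interior (integrableExpSet X μ)) (n : ℕ) :
    (fun t ↦ mgf X μ t - ∑ k ∈ Finset.range (n + 1), μ[X ^ k] / k.factorial * t ^ k)
      =o[𝓝 0] fun t ↦ t ^ n := by
  set s := interior (integrableExpSet X μ)
  have hs : IsOpen s := isOpen_interior
  have htaylor := taylor_isLittleO convex_integrableExpSet.interior h
    (analyticOnNhd_mgf.contDiffOn hs.uniqueDiffOn (n := n))
  rw [nhdsWithin_eq_nhds.mpr (hs.mem_nhds h)] at htaylor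
  simp only [sub_zero] at htaylor
  refine htaylor.congr_left fun t ↦ ?_
  rw [taylor_within_apply]
  congr 1
  refine Finset.sum_congr rfl fun k _ ↦ ?_
  rw [iteratedDerivWithin_of_isOpen hs h, iteratedDeriv_mgf_zero h, smul_eq_mul]
  ring

lemma tendsto_nat_mul_apply_div_sqrt_of_isLittleO {f : ℝ → ℝ} {A : ℝ}
    (hf : (fun t ↦ f t - A * t ^ 2) =o[𝓝 0] fun t ↦ t ^ 2) (c : ℝ) :
    Tendsto (fun n : ℕ ↦ n * f (c / √n)) atTop (𝓝 (A * c ^ 2)) := by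
  have hlim : Tendsto (fun n : ℕ ↦ c / √n) atTop (𝓝 0) :=
    tendsto_const_nhds.div_atTop (tendsto_sqrt_atTop.comp tendsto_natCast_atTop_atTop)
  have hscale : (fun n : ℕ ↦ (n : ℝ) * (c / √n) ^ 2) =ᶠ[atTop] fun _ ↦ c ^ 2 := by
    filter_upwards [eventually_ne_atTop 0] with n hn
    rw [div_pow, sq_sqrt n.cast_nonneg]
    field_simp
  have hrem : (fun n : ℕ ↦ n * (f (c / √n) - A * (c / √n) ^ 2)) =o[atTop] fun _ ↦ (1 : ℝ) :=
    ((isBigO_refl (fun n : ℕ ↦ (n : ℝ)) atTop).mul_isLittleO (hf.comp_tendsto hlim)).trans_isBigO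
      (hscale.trans_isBigO (isBigO_const_const _ one_ne_zero _))
  have := ((isLittleO_one_iff ℝ).mp hrem).add_const (A * c ^ 2)
  rw [zero_add] at this
  refine this.congr' ?_
  filter_upwards [hscale] with n hn
  linear_combination (-A) * hn

theorem mgf_expansion_second_order
    {Ω : Type*} [MeasurableSpace Ω] (μ : Measure Ω) [IsProbabilityMeasure μ]
    (X : Ω → ℝ) (hX : Measurable X)
    (hmean : ∫ ω, X ω ∂μ = 0)
    (K₁ : ℝ) (hK₁ : 0 < K₁)
    (hexp : Integrable (fun ω => Real.exp (K₁ * X ω ^ 2)) μ)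
    (a y : ℝ) :
    Tendsto
      (fun n : ℕ =>
        (n : ℝ) * ((∫ ω, Real.exp (a * X ω * y / Real.sqrt n) ∂μ) - 1))
      atTop (nhds (a ^ 2 * y ^ 2 / 2 * ∫ ω, X ω ^ 2 ∂μ)) := by
  have h0 : 0 ∈ interior (integrableExpSet X μ) := by
    simp [integrableExpSet, integrable_exp_mul_of_integrable_exp_mul_sq hX.aemeasurable hK₁ hexp]
  have htaylor : (fun t ↦ (mgf X μ t - 1) - μ[X ^ 2] / 2 * t ^ 2) =o[𝓝 0] fun t ↦ t ^ 2 := by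
    simpa [Finset.sum_range_succ, hmean, sub_sub] using mgf_sub_sum_moments_isLittleO h0 2
  convert tendsto_nat_mul_apply_div_sqrt_of_isLittleO htaylor (a * y) using 2 with n
  · simp only [mgf, mul_div_right_comm, mul_right_comm _ (X _)]
  · simp only [Pi.pow_apply]
    ring
end
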